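/- arXiv:2206.13285 — 4 statements merged into one kernel-verified Lean document; each statement's English description precedes it below -/
import Mathlib

section
/- Let f : (0,∞) → ℝ be convex. For all p, q > 0, the perspective value q·f(p/q) equals the supremum over (v,w) ∈ ℝ² of v·p + w·q subject to the constraint that r·v + w ≤ f(r) for all r ≥ 0 (with f(0) interpreted as the limit, possibly +∞). -/
/-! Evaluating the constraint at `r = p / q` bounds every `v * p + w * q` by `q * f (p / q)`;
the bound is attained by the supporting line of `f` at `p / q`, whose slope is the right
derivative there. -/

open Set

lemma ConvexOn.rightDeriv_mul_sub_add_le {S : Set ℝ} {f : ℝ → ℝ} {x y : ℝ}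
    (hf : ConvexOn ℝ S f) (hx : x ∈ interior S) (hy : y ∈ S) :
    derivWithin f (Ioi x) x * (y - x) + f x ≤ f y := by
  rcases lt_trichotomy y x with hyx | rfl | hxy
  · have hslope : slope f y x ≤ derivWithin f (Ioi x) x :=
      (hf.slope_le_leftDeriv_of_mem_interior hy hx hyx).trans
        (hf.leftDeriv_le_rightDeriv_of_mem_interior hx)
    rw [slope_def_field, div_le_iff₀ (sub_pos.mpr hyx)] at hslope
    linarith
  · simp
  · have hslope : derivWithin f (Ioi x) x ≤ slope f x y :=
      hf.rightDeriv_le_slope_of_mem_interior hx hy hxy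
    rw [slope_def_field, le_div_iff₀ (sub_pos.mpr hxy)] at hslope
    linarith

/-- Variational representation of the perspective function: for `f` convex on `(0,∞)`
and `p, q > 0`, `q * f (p / q)` is the least upper bound of `v * p + w * q` over pairs
`(v, w)` satisfying `r * v + w ≤ f r` for all `r > 0`. -/
theorem stmt1 (f : ℝ → ℝ) (hconv : ConvexOn ℝ (Ioi (0:ℝ)) f)
    (p q : ℝ) (hp : 0 < p) (hq : 0 < q) :
    IsLUB {z : ℝ | ∃ v w : ℝ, (∀ r : ℝ, 0 < r → r * v + w ≤ f r) ∧ z = v * p + w * q}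
      (q * f (p / q)) := by
  obtain ⟨x, hx, rfl⟩ : ∃ x, 0 < x ∧ p = x * q :=
    ⟨p / q, div_pos hp hq, (div_mul_cancel₀ p hq.ne').symm⟩
  rw [mul_div_cancel_right₀ x hq.ne']
  constructor
  · rintro z ⟨v, w, hvw, rfl⟩
    linear_combination mul_le_mul_of_nonneg_left (hvw x hx) hq.le
  · intro b hb
    set v := derivWithin f (Ioi x) x
    refine hb ⟨v, f x - v * x, fun r hr => ?_, by ring⟩
    have := hconv.rightDeriv_mul_sub_add_le (x := x) (by rwa [interior_Ioi]) (mem_Ioi.mpr hr)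
    linarith
end

section
/- Let f : (0,∞) → ℝ be convex, f(1) = 0, and strictly convex at 1. If p and q are probability measures with p ≪ q and D(p‖q) = 0, then p = q. -/
/-!
The right derivative `c` of `f` at `1` gives a supporting line `t ↦ c (t - 1)` of `f` on
`[0, ∞)`. Since `dp/dq` has `q`-mean `1`, the nonnegative function `f (dp/dq) - c (dp/dq - 1)`
has integral `D(p‖q) = 0`, so `f (dp/dq)` lies on the supporting line `q`-a.e. Strict convexity
at `1` forbids the line to touch the graph of `f` on both sides of `1`, so `dp/dq ≤ 1` a.e. or
`dp/dq ≥ 1` a.e.; together with mean `1` this forces `dp/dq = 1` a.e., i.e. `p = q`.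
-/

open MeasureTheory Set

namespace ConvexOn

variable {S : Set ℝ} {f : ℝ → ℝ} {x y : ℝ}

lemma rightDeriv_mul_sub_add_le_s8 (hfc : ConvexOn ℝ S f) (hx : x ∈ interior S) (hy : y ∈ S) :
    derivWithin f (Ioi x) x * (y - x) + f x ≤ f y := by
  rcases lt_trichotomy y x with hyx | rfl | hxy
  · have h := (hfc.slope_le_leftDeriv_of_mem_interior hy hx hyx).trans
      (hfc.leftDeriv_le_rightDeriv_of_mem_interior hx)
    rw [slope_def_field, div_le_iff₀ (sub_pos.2 hyx)] at h
    linarith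
  · simp
  · have h := hfc.rightDeriv_le_slope_of_mem_interior hx hy hxy
    rw [slope_def_field, le_div_iff₀ (sub_pos.2 hxy)] at h
    linarith

end ConvexOn

def StrictConvexAtOne (f : ℝ → ℝ) : Prop :=
  ∀ x y : ℝ, 0 ≤ x → x < 1 → 1 < y → ∀ a b : ℝ, 0 < a → 0 < b →
    a + b = 1 → a * x + b * y = 1 → f 1 < a * f x + b * f y

lemma StrictConvexAtOne.forall_le_one_or_forall_one_le {f : ℝ → ℝ} (hf : StrictConvexAtOne f)
    (hf1 : f 1 = 0) (c : ℝ) :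
    (∀ t, 0 ≤ t → f t = c * (t - 1) → t ≤ 1) ∨ (∀ t, 0 ≤ t → f t = c * (t - 1) → 1 ≤ t) := by
  by_contra! ⟨⟨y, -, hfy, hy⟩, ⟨x, hx, hfx, hx1⟩⟩
  have hd : 0 < y - x := by linarith
  set a := (y - 1) / (y - x)
  set b := (1 - x) / (y - x)
  have hab : a + b = 1 := by simp only [a, b]; field_simp; ring
  have hcomb : a * x + b * y = 1 := by simp only [a, b]; field_simp; ring
  have key := hf x y hx hx1 hy a b (div_pos (by linarith) hd) (div_pos (by linarith) hd) hab hcomb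
  rw [hf1, hfx, hfy] at key
  have hline : a * (c * (x - 1)) + b * (c * (y - 1)) = 0 := by
    linear_combination c * hcomb - c * hab
  linarith

lemma ae_eq_one_of_integral_comp_eq_zero {X : Type*} [MeasurableSpace X] {μ : Measure X}
    [IsProbabilityMeasure μ] {g : X → ℝ} (hg0 : ∀ᵐ x ∂μ, 0 ≤ g x) (hg : Integrable g μ)
    (hg1 : ∫ x, g x ∂μ = 1) {f : ℝ → ℝ} (hconv : ConvexOn ℝ (Ici 0) f) (hf1 : f 1 = 0)
    (hstrict : StrictConvexAtOne f) (hfg : Integrable (fun x => f (g x)) μ)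
    (hD : ∫ x, f (g x) ∂μ = 0) :
    g =ᵐ[μ] 1 := by
  set c := derivWithin f (Ioi 1) 1
  have hline_int : Integrable (fun x => c * (g x - 1)) μ :=
    (hg.sub (integrable_const 1)).const_mul c
  have hone : (1 : ℝ) ∈ interior (Ici 0) := by rw [interior_Ici]; exact mem_Ioi.2 one_pos
  have hline_le : (fun x => c * (g x - 1)) ≤ᵐ[μ] fun x => f (g x) := by
    filter_upwards [hg0] with x hx
    simpa [hf1] using hconv.rightDeriv_mul_sub_add_le_s8 hone (mem_Ici.2 hx)
  have hcontact : ∀ᵐ x ∂μ, f (g x) = c * (g x - 1) := by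
    refine ((integral_eq_iff_of_ae_le hline_int hfg hline_le).1 ?_).mono fun x hx => hx.symm
    rw [integral_const_mul, integral_sub hg (integrable_const 1), hg1, hD]
    simp
  have hmean : ∫ x, g x ∂μ = ∫ _, (1 : ℝ) ∂μ := by simp [hg1]
  rcases hstrict.forall_le_one_or_forall_one_le hf1 c with hle | hge
  · exact (integral_eq_iff_of_ae_le hg (integrable_const 1)
      (by filter_upwards [hg0, hcontact] with x hx hfx using hle _ hx hfx)).1 hmean
  · exact ((integral_eq_iff_of_ae_le (integrable_const 1) hg
      (by filter_upwards [hg0, hcontact] with x hx hfx using hge _ hx hfx)).1 hmean.symm).symm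

/-- If `f` is convex on `[0,∞)` with `f 1 = 0` and strictly convex at `1`, and `p ≪ q`
are probability measures with `D(p‖q) = ∫ f (dp/dq) dq = 0`, then `p = q`. -/
theorem stmt8 {X : Type*} [MeasurableSpace X]
    (p q : Measure X) [IsProbabilityMeasure p] [IsProbabilityMeasure q]
    (hpq : p ≪ q)
    (f : ℝ → ℝ) (hconv : ConvexOn ℝ (Ici (0:ℝ)) f) (hf1 : f 1 = 0)
    (hstrict : ∀ x y : ℝ, 0 ≤ x → x < 1 → 1 < y → ∀ a b : ℝ, 0 < a → 0 < b →
      a + b = 1 → a * x + b * y = 1 → f 1 < a * f x + b * f y)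
    (hint : Integrable (fun x => f ((p.rnDeriv q x).toReal)) q)
    (hD : ∫ x, f ((p.rnDeriv q x).toReal) ∂q = 0) :
    p = q := by
  have hmean : ∫ x, (p.rnDeriv q x).toReal ∂q = 1 := by
    simp [Measure.integral_toReal_rnDeriv hpq]
  have hg1 := ae_eq_one_of_integral_comp_eq_zero (.of_forall fun _ => ENNReal.toReal_nonneg)
    Measure.integrable_toReal_rnDeriv hmean hconv hf1 hstrict hint hD
  refine (Measure.rnDeriv_eq_one_iff_eq hpq).1 ?_
  filter_upwards [hg1] with x hx
  exact (ENNReal.toReal_eq_one_iff _).1 hx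
end

section
/- Let X be a finite measurable space (or a general space), q a finite positive measure, f strictly convex differentiable on (0,∞) with f(1)=0, and h : X → ℝ bounded. Then sup over probability measures p ≪ q of (∫ h dp - D(p‖q)) equals inf over ρ ∈ ℝ of (ρ + ∫ f*(h(x) - ρ) dq(x)), where f* is the Fenchel conjugate of f. -/
/-!
Weak duality is the Fenchel–Young inequality `u t - f t ≤ f* u`, valid for `t ≥ 0` by continuity
of `f` at `0`, applied at `u = h x - ρ`, `t = p x / q x` and summed against `q`.

For equality, let `T u ≥ 0` maximise `t ↦ u t - f t`: it is the inverse of `f'` (which is unbounded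
above because `f*` is finite), and `0` when `u` lies below the range of `f'`. Strict convexity makes
`T` monotone with range `(0, ∞)` or `[0, ∞)`, hence continuous, so by the intermediate value theorem
some `ρ` makes `p x = q x * T (h x - ρ)` a probability vector; for this pair Fenchel–Young is an
equality in every term.
-/

open Set Finset

lemma Monotone.continuous_of_Ioi_subset_range {T : ℝ → ℝ} {a : ℝ} (hT : Monotone T)
    (hle : ∀ u, a ≤ T u) (hrange : Set.Ioi a ⊆ Set.range T) : Continuous T := by
  let T' : ℝ → Set.Ici a := fun u => ⟨T u, hle u⟩
  have hdense : DenseRange T' := by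
    refine Dense.mono (s₁ := Set.Ioi ⊥) (fun y (hy : a < y.1) => ?_) ?_
    · obtain ⟨u, hu⟩ := hrange hy
      exact ⟨u, Subtype.ext hu⟩
    · rw [dense_iff_closure_eq, closure_Ioi, Set.Ici_bot]
  exact continuous_subtype_val.comp
    ((show Monotone T' from fun _ _ huv => hT huv).continuous_of_denseRange hdense)

section Conjugate

variable {f : ℝ → ℝ}

lemma continuousOn_Ici_of_differentiableAt (hdiff : ∀ x ∈ Set.Ioi (0:ℝ), DifferentiableAt ℝ f x)
    (hcont : ContinuousWithinAt f (Set.Ici (0:ℝ)) 0) : ContinuousOn f (Set.Ici 0) := by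
  intro x hx
  rcases (Set.mem_Ici.1 hx).eq_or_lt with rfl | hx
  · exact hcont
  · exact (hdiff x hx).continuousAt.continuousWithinAt

lemma mul_sub_le_of_isLUB (hcont : ContinuousWithinAt f (Set.Ici (0:ℝ)) 0) {u c : ℝ}
    (hc : IsLUB {z : ℝ | ∃ t : ℝ, 0 < t ∧ z = u * t - f t} c) {t : ℝ} (ht : 0 ≤ t) :
    u * t - f t ≤ c := by
  rcases ht.eq_or_lt with rfl | ht
  · exact ContinuousWithinAt.closure_le (s := Set.Ioi 0) (by simp)
      ((continuousWithinAt_const.mul continuousWithinAt_id).sub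
        (hcont.mono Set.Ioi_subset_Ici_self)) continuousWithinAt_const
      fun t ht => hc.1 ⟨t, ht, rfl⟩
  · exact hc.1 ⟨t, ht, rfl⟩

lemma exists_lt_deriv_of_forall_bddAbove (hconv : ConvexOn ℝ (Set.Ioi 0) f)
    (hdiff : ∀ x ∈ Set.Ioi (0:ℝ), DifferentiableAt ℝ f x)
    (hbdd : ∀ v, BddAbove {z : ℝ | ∃ t : ℝ, 0 < t ∧ z = v * t - f t}) (u : ℝ) :
    ∃ t > 0, u < deriv f t := by
  obtain ⟨C, hC⟩ := hbdd (u + 1)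
  set s := max 2 (C + f 1 - u + 1)
  have hs2 : 2 ≤ s := le_max_left _ _
  have hsC : C + f 1 - u + 1 ≤ s := le_max_right _ _
  refine ⟨s, by linarith, lt_of_lt_of_le ?_ (hconv.slope_le_deriv (x := 1) (by simp)
    (by simp; linarith) (by linarith) (hdiff s (by simp; linarith)))⟩
  rw [slope_def_field, lt_div_iff₀ (by linarith)]
  nlinarith [hC ⟨s, by linarith, rfl⟩]

/- When `u` lies below the range of `f'`, the supremum of `t ↦ u * t - f t` over `t > 0` is
approached as `t → 0`, hence the value `0`. -/
open Classical in
noncomputable def conjMaximizer (f : ℝ → ℝ) (u : ℝ) : ℝ :=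
  if h : ∃ t > 0, deriv f t = u then h.choose else 0

lemma conjMaximizer_spec (hconv : ConvexOn ℝ (Set.Ioi 0) f)
    (hdiff : ∀ x ∈ Set.Ioi (0:ℝ), DifferentiableAt ℝ f x)
    (hunb : ∀ u, ∃ t > 0, u < deriv f t) (u : ℝ) :
    0 ≤ conjMaximizer f u ∧ (∀ t > 0, t ≤ conjMaximizer f u → deriv f t ≤ u) ∧
      ∀ t > 0, conjMaximizer f u ≤ t → u ≤ deriv f t := by
  have hmono := hconv.monotoneOn_deriv hdiff
  unfold conjMaximizer
  split_ifs with hex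
  · obtain ⟨hpos, heq⟩ := hex.choose_spec
    exact ⟨hpos.le, fun t ht hle => heq ▸ hmono ht hpos hle,
      fun t ht hle => heq ▸ hmono hpos ht hle⟩
  · refine ⟨le_rfl, fun t ht hle => absurd ht hle.not_gt, fun t ht _ => ?_⟩
    by_contra! hlt
    -- Darboux: `u` lies between two values of `f'` on `(0, ∞)`, hence is one of them.
    obtain ⟨s, hs, hus⟩ := hunb u
    obtain ⟨r, hr, hru⟩ := (ordConnected_Ioi.image_deriv hdiff).out
      (mem_image_of_mem _ ht) (mem_image_of_mem _ hs) ⟨hlt.le, hus.le⟩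
    exact hex ⟨r, hr, hru⟩

lemma monotone_conjMaximizer (hconv : ConvexOn ℝ (Set.Ioi 0) f)
    (hdiff : ∀ x ∈ Set.Ioi (0:ℝ), DifferentiableAt ℝ f x)
    (hunb : ∀ u, ∃ t > 0, u < deriv f t) : Monotone (conjMaximizer f) := by
  intro u v huv
  rcases huv.eq_or_lt with rfl | huv
  · exact le_rfl
  by_contra! hlt
  obtain ⟨hv0, -, hv⟩ := conjMaximizer_spec hconv hdiff hunb v
  obtain ⟨-, hu, -⟩ := conjMaximizer_spec hconv hdiff hunb u
  obtain ⟨s, hvs, hsu⟩ := exists_between hlt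
  have hvs' := hv s (hv0.trans_lt hvs) hvs.le
  have hsu' := hu s (hv0.trans_lt hvs) hsu.le
  linarith

lemma conjMaximizer_deriv (hconv : StrictConvexOn ℝ (Set.Ioi 0) f)
    (hdiff : ∀ x ∈ Set.Ioi (0:ℝ), DifferentiableAt ℝ f x) {t : ℝ} (ht : 0 < t) :
    conjMaximizer f (deriv f t) = t := by
  have hex : ∃ s > 0, deriv f s = deriv f t := ⟨t, ht, rfl⟩
  rw [conjMaximizer, dif_pos hex]
  exact (hconv.strictMonoOn_deriv hdiff).injOn hex.choose_spec.1 ht hex.choose_spec.2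

lemma continuous_conjMaximizer (hconv : StrictConvexOn ℝ (Set.Ioi 0) f)
    (hdiff : ∀ x ∈ Set.Ioi (0:ℝ), DifferentiableAt ℝ f x)
    (hunb : ∀ u, ∃ t > 0, u < deriv f t) : Continuous (conjMaximizer f) :=
  (monotone_conjMaximizer hconv.convexOn hdiff hunb).continuous_of_Ioi_subset_range
    (fun u => (conjMaximizer_spec hconv.convexOn hdiff hunb u).1)
    fun t ht => ⟨deriv f t, conjMaximizer_deriv hconv hdiff ht⟩

lemma mul_sub_le_conjMaximizer (hconv : ConvexOn ℝ (Set.Ioi 0) f)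
    (hdiff : ∀ x ∈ Set.Ioi (0:ℝ), DifferentiableAt ℝ f x)
    (hcont : ContinuousWithinAt f (Set.Ici (0:ℝ)) 0)
    (hunb : ∀ u, ∃ t > 0, u < deriv f t) (u : ℝ) {t : ℝ} (ht : 0 ≤ t) :
    u * t - f t ≤ u * conjMaximizer f u - f (conjMaximizer f u) := by
  obtain ⟨hT0, hle, hge⟩ := conjMaximizer_spec hconv hdiff hunb u
  set T := conjMaximizer f u
  set g : ℝ → ℝ := fun t => u * t - f t
  have hg : ContinuousOn g (Set.Ici 0) :=
    (continuousOn_const.mul continuousOn_id).sub (continuousOn_Ici_of_differentiableAt hdiff hcont)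
  have hderiv : ∀ s > 0, HasDerivAt g (u - deriv f s) s := fun s hs => by
    have := ((hasDerivAt_id s).const_mul u).sub (hdiff s hs).hasDerivAt
    rwa [mul_one] at this
  have hdiffOn : ∀ s : Set ℝ, s ⊆ Set.Ioi 0 → DifferentiableOn ℝ g s := fun s hs x hx =>
    (hderiv x (hs hx)).differentiableAt.differentiableWithinAt
  -- `g' = u - f'` changes sign from `+` to `-` at `T`.
  have hmono : MonotoneOn g (Set.Icc 0 T) := by
    refine monotoneOn_of_deriv_nonneg (convex_Icc 0 T) (hg.mono Set.Icc_subset_Ici_self)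
      (hdiffOn _ (by rw [interior_Icc]; exact Set.Ioo_subset_Ioi_self)) fun s hs => ?_
    rw [interior_Icc] at hs
    rw [(hderiv s hs.1).deriv, sub_nonneg]
    exact hle s hs.1 hs.2.le
  have hanti : AntitoneOn g (Set.Ici T) := by
    refine antitoneOn_of_deriv_nonpos (convex_Ici T) (hg.mono (Set.Ici_subset_Ici.2 hT0))
      (hdiffOn _ (by rw [interior_Ici]; exact Set.Ioi_subset_Ioi hT0)) fun s hs => ?_
    rw [interior_Ici] at hs
    rw [(hderiv s (hT0.trans_lt hs)).deriv, sub_nonpos]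
    exact hge s (hT0.trans_lt hs) hs.le
  rcases le_total t T with htT | hTt
  · exact hmono ⟨ht, htT⟩ ⟨hT0, le_rfl⟩ htT
  · exact hanti (Set.mem_Ici.2 le_rfl) hTt hTt

lemma eq_mul_sub_conjMaximizer_of_isLUB (hconv : ConvexOn ℝ (Set.Ioi 0) f)
    (hdiff : ∀ x ∈ Set.Ioi (0:ℝ), DifferentiableAt ℝ f x)
    (hcont : ContinuousWithinAt f (Set.Ici (0:ℝ)) 0)
    (hunb : ∀ u, ∃ t > 0, u < deriv f t) {u c : ℝ}
    (hc : IsLUB {z : ℝ | ∃ t : ℝ, 0 < t ∧ z = u * t - f t} c) :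
    c = u * conjMaximizer f u - f (conjMaximizer f u) :=
  le_antisymm
    (hc.2 fun _ ⟨_, ht, hz⟩ => hz ▸ mul_sub_le_conjMaximizer hconv hdiff hcont hunb u ht.le)
    (mul_sub_le_of_isLUB hcont hc (conjMaximizer_spec hconv hdiff hunb u).1)

end Conjugate

section FiniteSums

variable {X : Type*} [Fintype X] {q : X → ℝ}

lemma weak_duality (hq : ∀ x, 0 < q x) {f fstar : ℝ → ℝ}
    (hfenchel : ∀ u t, 0 ≤ t → u * t - f t ≤ fstar u) (h p : X → ℝ) (hp : ∀ x, 0 ≤ p x)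
    (hp1 : ∑ x, p x = 1) (ρ : ℝ) :
    ∑ x, h x * p x - ∑ x, q x * f (p x / q x) ≤ ρ + ∑ x, q x * fstar (h x - ρ) := by
  have key : ∀ x, h x * p x - ρ * p x - q x * f (p x / q x) ≤ q x * fstar (h x - ρ) := fun x =>
    calc h x * p x - ρ * p x - q x * f (p x / q x)
        = q x * ((h x - ρ) * (p x / q x) - f (p x / q x)) := by field_simp [(hq x).ne']
      _ ≤ q x * fstar (h x - ρ) := mul_le_mul_of_nonneg_left
          (hfenchel _ _ (div_nonneg (hp x) (hq x).le)) (hq x).le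
  have hsum := Finset.sum_le_sum fun x (_ : x ∈ Finset.univ) => key x
  simp only [Finset.sum_sub_distrib, ← Finset.mul_sum, hp1] at hsum
  linarith

lemma primal_eq_dual_of_conj_eq (hq : ∀ x, q x ≠ 0) {f fstar : ℝ → ℝ} (h t : X → ℝ) (ρ : ℝ)
    (ht : ∑ x, q x * t x = 1) (hfstar : ∀ x, fstar (h x - ρ) = (h x - ρ) * t x - f (t x)) :
    ∑ x, h x * (q x * t x) - ∑ x, q x * f (q x * t x / q x) =
      ρ + ∑ x, q x * fstar (h x - ρ) := by
  have hterm : ∀ x, q x * fstar (h x - ρ) =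
      h x * (q x * t x) - q x * f (q x * t x / q x) - ρ * (q x * t x) := fun x => by
    rw [hfstar, mul_div_cancel_left₀ _ (hq x)]; ring
  simp only [hterm, Finset.sum_sub_distrib, ← Finset.mul_sum, ht]
  ring

lemma exists_sum_mul_apply_sub_eq_one (hq : ∀ x, 0 ≤ q x) {T : ℝ → ℝ} (hT : Monotone T)
    (hTc : Continuous T) {a : ℝ} (ha : (∑ x, q x) * T a = 1) (h : X → ℝ) :
    ∃ ρ, ∑ x, q x * T (h x - ρ) = 1 := by
  set c := ∑ x, |h x|
  have hc : ∀ x, |h x| ≤ c := fun x =>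
    Finset.single_le_sum (f := fun x => |h x|) (fun x _ => abs_nonneg _) (Finset.mem_univ x)
  have hqa : ∑ x, q x * T a = 1 := by rw [← Finset.sum_mul]; exact ha
  have hφ : Continuous fun ρ => ∑ x, q x * T (h x - ρ) := by fun_prop
  obtain ⟨ρ, hρ⟩ := mem_range_of_exists_le_of_exists_ge hφ
    ⟨c - a, (Finset.sum_le_sum fun x _ => mul_le_mul_of_nonneg_left
      (hT (by linarith [le_abs_self (h x), hc x])) (hq x)).trans_eq hqa⟩
    ⟨-c - a, hqa.symm.trans_le (Finset.sum_le_sum fun x _ => mul_le_mul_of_nonneg_left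
      (hT (by linarith [neg_abs_le (h x), hc x])) (hq x))⟩
  exact ⟨ρ, hρ⟩

end FiniteSums

theorem stmt11_general {X : Type*} [Fintype X] [Nonempty X]
    (q : X → ℝ) (hq : ∀ x, 0 < q x)
    (f : ℝ → ℝ)
    (hconv : StrictConvexOn ℝ (Ioi (0:ℝ)) f)
    (hdiff : ∀ x ∈ Ioi (0:ℝ), DifferentiableAt ℝ f x)
    (hcont : ContinuousWithinAt f (Ici (0:ℝ)) 0)
    (h : X → ℝ)
    (fstar : ℝ → ℝ)
    (hfstar : ∀ u : ℝ, IsLUB {z : ℝ | ∃ t : ℝ, 0 < t ∧ z = u * t - f t} (fstar u)) :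
    sSup {z : ℝ | ∃ p : X → ℝ, (∀ x, 0 ≤ p x) ∧ (∑ x, p x = 1) ∧
        z = ∑ x, h x * p x - ∑ x, q x * f (p x / q x)} =
      sInf {z : ℝ | ∃ ρ : ℝ, z = ρ + ∑ x, q x * fstar (h x - ρ)} := by
  have hunb := exists_lt_deriv_of_forall_bddAbove hconv.convexOn hdiff fun v => (hfstar v).bddAbove
  set T := conjMaximizer f
  have hQ : 0 < ∑ x, q x := Finset.sum_pos (fun x _ => hq x) Finset.univ_nonempty
  obtain ⟨ρ, hρ⟩ := exists_sum_mul_apply_sub_eq_one (fun x => (hq x).le)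
    (monotone_conjMaximizer hconv.convexOn hdiff hunb) (continuous_conjMaximizer hconv hdiff hunb)
    (a := deriv f (∑ x, q x)⁻¹)
    (by rw [conjMaximizer_deriv hconv hdiff (inv_pos.2 hQ), mul_inv_cancel₀ hQ.ne']) h
  have hp : ∀ x, 0 ≤ q x * T (h x - ρ) := fun x =>
    mul_nonneg (hq x).le (conjMaximizer_spec hconv.convexOn hdiff hunb _).1
  have hopt := primal_eq_dual_of_conj_eq (fun x => (hq x).ne') h (fun x => T (h x - ρ)) ρ hρ
    fun x => eq_mul_sub_conjMaximizer_of_isLUB hconv.convexOn hdiff hcont hunb (hfstar _)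
  have hweak := weak_duality hq (fun u t ht => mul_sub_le_of_isLUB hcont (hfstar u) ht) h
  set v := ρ + ∑ x, q x * fstar (h x - ρ)
  refine (IsGreatest.csSup_eq (a := v) ⟨?_, ?_⟩).trans (IsLeast.csInf_eq (a := v) ⟨?_, ?_⟩).symm
  · exact ⟨_, hp, hρ, hopt.symm⟩
  · rintro _ ⟨p, hp, hp1, rfl⟩
    exact hweak p hp hp1 ρ
  · exact ⟨ρ, rfl⟩
  · rintro _ ⟨ρ', rfl⟩
    exact hopt ▸ hweak _ hp hρ ρ'

/-- f-partition function duality on a finite space: for a finite positive measure `q`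
(given by positive weights), `f` strictly convex and differentiable on `(0,∞)` with
`f 1 = 0` (extended continuously at 0), `h` a (bounded) function, and `f*` the Fenchel
conjugate of `f`,
`sup_{p prob., p ≪ q} (∫ h dp - D(p‖q)) = inf_ρ (ρ + ∫ f*(h - ρ) dq)`. -/
theorem stmt11 {X : Type*} [Fintype X] [Nonempty X]
    (q : X → ℝ) (hq : ∀ x, 0 < q x)
    (f : ℝ → ℝ)
    (hconv : StrictConvexOn ℝ (Ioi (0:ℝ)) f)
    (hdiff : ∀ x ∈ Ioi (0:ℝ), DifferentiableAt ℝ f x)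
    (hf1 : f 1 = 0)
    (hcont : ContinuousWithinAt f (Ici (0:ℝ)) 0)
    (h : X → ℝ)
    (fstar : ℝ → ℝ)
    (hfstar : ∀ u : ℝ, IsLUB {z : ℝ | ∃ t : ℝ, 0 < t ∧ z = u * t - f t} (fstar u)) :
    sSup {z : ℝ | ∃ p : X → ℝ, (∀ x, 0 ≤ p x) ∧ (∑ x, p x = 1) ∧
        z = ∑ x, h x * p x - ∑ x, q x * f (p x / q x)} =
      sInf {z : ℝ | ∃ ρ : ℝ, z = ρ + ∑ x, q x * fstar (h x - ρ)} :=
  stmt11_general q hq f hconv hdiff hcont h fstar hfstar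
end

section
/- For λ ≥ 0, the function f(t) = (t-1)²/(λ + t) is operator convex on positive definite matrices: for Hermitian positive definite A, B and μ ∈ [0,1], f(μA + (1-μ)B) ≼ μ f(A) + (1-μ) f(B) in the Löwner order, where f is applied spectrally. -/
/-! On the spectrum of a positive definite matrix, `f t = (t - 1)² / (λ + t)` equals
`t - (λ + 2) + (λ + 1)² (λ + t)⁻¹`. The affine part contributes nothing to
`μ f(A) + (1 - μ) f(B) - f(μ A + (1 - μ) B)`, which is therefore `(λ + 1)²` times
`μ (λ + A)⁻¹ + (1 - μ) (λ + B)⁻¹ - (μ (λ + A) + (1 - μ) (λ + B))⁻¹`, and this is positive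
semidefinite because the inverse is operator convex. -/

open Matrix
open scoped ComplexOrder

variable {d : ℕ}

/-- Spectral application of a real function to a Hermitian matrix:
if `A = U diag(λ) U*` then `hermApply hA f = U diag(f λ) U*`. -/
noncomputable def hermApply {A : Matrix (Fin d) (Fin d) ℂ} (hA : A.IsHermitian)
    (f : ℝ → ℝ) : Matrix (Fin d) (Fin d) ℂ :=
  (hA.eigenvectorUnitary : Matrix (Fin d) (Fin d) ℂ) *
    diagonal (fun i => (f (hA.eigenvalues i) : ℂ)) *
    star (hA.eigenvectorUnitary : Matrix (Fin d) (Fin d) ℂ)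

namespace Matrix

theorem PosDef.convexComb {n 𝕜 : Type*} [RCLike 𝕜] {X Y : Matrix n n 𝕜}
    (hX : X.PosDef) (hY : Y.PosDef) {μ : ℝ} (hμ0 : 0 ≤ μ) (hμ1 : μ ≤ 1) :
    (μ • X + (1 - μ) • Y).PosDef := by
  rcases hμ1.lt_or_eq with hμ1 | rfl
  · exact PosDef.posSemidef_add (hX.posSemidef.smul hμ0) (hY.smul (sub_pos.2 hμ1))
  · simpa using hX

variable {n : Type*} [Fintype n] [DecidableEq n]

open scoped MatrixOrder Matrix.Norms.L2Operator in
theorem PosDef.posSemidef_convexComb_inv_sub_inv_convexComb {X Y : Matrix n n ℂ}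
    (hX : X.PosDef) (hY : Y.PosDef) {μ : ℝ} (hμ0 : 0 ≤ μ) (hμ1 : μ ≤ 1) :
    (μ • X⁻¹ + (1 - μ) • Y⁻¹ - (μ • X + (1 - μ) • Y)⁻¹).PosSemidef := by
  simpa only [nonsing_inv_eq_ringInverse] using Matrix.le_iff.mp <|
    CStarAlgebra.convexOn_ringInverse.2 hX.isStrictlyPositive hY.isStrictlyPositive hμ0
      (sub_nonneg.2 hμ1) (add_sub_cancel μ 1)

theorem PosDef.cfc_sub_one_sq_div_const_add {𝕜 : Type*} [RCLike 𝕜] {A : Matrix n n 𝕜}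
    (hA : A.PosDef) {lam : ℝ} (hlam : 0 ≤ lam) :
    cfc (fun t => (t - 1) ^ 2 / (lam + t)) A
      = A - (lam + 2) • 1 + (lam + 1) ^ 2 • (lam • 1 + A)⁻¹ := by
  have hsa : IsSelfAdjoint A := hA.1
  have hcont (f : ℝ → ℝ) : ContinuousOn f (spectrum ℝ A) := A.finite_real_spectrum.continuousOn f
  have hne : ∀ t ∈ spectrum ℝ A, lam + t ≠ 0 := by
    rw [hA.1.spectrum_real_eq_range_eigenvalues]
    rintro _ ⟨i, rfl⟩
    exact (add_pos_of_nonneg_of_pos hlam (hA.eigenvalues_pos i)).ne'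
  calc cfc (fun t => (t - 1) ^ 2 / (lam + t)) A
      = cfc (fun t => (t - (lam + 2)) + (lam + 1) ^ 2 * (lam + t)⁻¹) A := by
        refine cfc_congr fun t ht => ?_
        field_simp [hne t ht]
        ring
    _ = A - (lam + 2) • 1 + (lam + 1) ^ 2 • (lam • 1 + A)⁻¹ := by
        rw [cfc_add _ _ _ (hcont _) (hcont _), cfc_sub _ _ _ (hcont _) (hcont _), cfc_id' ℝ A,
          cfc_const (lam + 2) A, cfc_const_mul _ _ _ (hcont _), cfc_inv _ _ hne (hcont _),
          cfc_const_add _ _ _ (hcont _), cfc_id' ℝ A, nonsing_inv_eq_ringInverse,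
          Algebra.algebraMap_eq_smul_one, Algebra.algebraMap_eq_smul_one]

end Matrix

theorem hermApply_eq_cfc {A : Matrix (Fin d) (Fin d) ℂ} (hA : A.IsHermitian) (f : ℝ → ℝ) :
    hermApply hA f = cfc f A := by
  rw [hA.cfc_eq, IsHermitian.cfc, Unitary.conjStarAlgAut_apply]
  rfl

/-- For `λ ≥ 0`, the function `f t = (t-1)²/(λ+t)` is operator convex on positive
definite matrices: for Hermitian positive definite `A, B` and `μ ∈ [0,1]`,
`f(μA + (1-μ)B) ≼ μ f(A) + (1-μ) f(B)` in the Löwner order. -/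
theorem stmt13 (lam : ℝ) (hlam : 0 ≤ lam)
    (A B : Matrix (Fin d) (Fin d) ℂ)
    (hA : A.PosDef) (hB : B.PosDef)
    (μ : ℝ) (hμ : μ ∈ Set.Icc (0:ℝ) 1)
    (hC : ((μ : ℂ) • A + ((1 - μ : ℝ) : ℂ) • B).IsHermitian) :
    let f : ℝ → ℝ := fun t => (t - 1) ^ 2 / (lam + t)
    ((μ : ℂ) • hermApply hA.1 f + ((1 - μ : ℝ) : ℂ) • hermApply hB.1 f
      - hermApply hC f).PosSemidef := by
  intro f
  obtain ⟨hμ0, hμ1⟩ := hμ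
  have hshift {X : Matrix (Fin d) (Fin d) ℂ} (hX : X.PosDef) : (lam • 1 + X).PosDef :=
    PosDef.posSemidef_add (PosSemidef.one.smul hlam) hX
  have hinv := (hshift hA).posSemidef_convexComb_inv_sub_inv_convexComb (hshift hB) hμ0 hμ1
  simp only [hermApply_eq_cfc, Complex.coe_smul]
  rw [hA.cfc_sub_one_sq_div_const_add hlam, hB.cfc_sub_one_sq_div_const_add hlam,
    (hA.convexComb hB hμ0 hμ1).cfc_sub_one_sq_div_const_add hlam,
    show lam • 1 + (μ • A + (1 - μ) • B) = μ • (lam • 1 + A) + (1 - μ) • (lam • 1 + B) by module]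
  convert hinv.smul (sq_nonneg (lam + 1)) using 1
  module
end
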